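/- arXiv:2310.11159 — 7 statements merged into one kernel-verified Lean document; each statement's English description precedes it below -/
import Mathlib

section
/- Let Π ∈ S^{q+r} with Π22 ≤ 0 and ker Π22 ⊆ ker Π12. Then the set Z_r(Π) := { Z ∈ R^{r×q} : [I; Z]^T Π [I; Z] ≥ 0 } is nonempty if and only if the generalized Schur complement Π|Π22 = Π11 - Π12 Π22† Π21 is positive semidefinite. -/
open Matrix

open Classical in
/-- Moore-Penrose pseudoinverse (defined by choice from the four Penrose conditions). -/
noncomputable def pinv {k : Type*} [Fintype k] [DecidableEq k] (A : Matrix k k ℝ) : Matrix k k ℝ :=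
  if h : ∃ B : Matrix k k ℝ, A * B * A = A ∧ B * A * B = B ∧ (A * B)ᵀ = A * B ∧ (B * A)ᵀ = B * A
  then h.choose else 0

lemma penrose_exists {k : Type*} [Fintype k] [DecidableEq k] (A : Matrix k k ℝ) (hA : Aᵀ = A) :
    ∃ B : Matrix k k ℝ, A * B * A = A ∧ B * A * B = B ∧ (A * B)ᵀ = A * B ∧ (B * A)ᵀ = B * A := by
  have hH : A.IsHermitian := by rwa [Matrix.IsHermitian, conjTranspose_eq_transpose_of_trivial]
  set U : Matrix k k ℝ := (hH.eigenvectorUnitary : Matrix k k ℝ) with hU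
  have hUU : star U * U = 1 := Unitary.coe_star_mul_self hH.eigenvectorUnitary
  set d : k → ℝ := hH.eigenvalues with hd
  have hspec : A = U * diagonal d * star U := by simpa using hH.spectral_theorem
  have key : ∀ e f : k → ℝ, (U * diagonal e * star U) * (U * diagonal f * star U)
      = U * diagonal (e * f) * star U := by
    intro e f
    calc (U * diagonal e * star U) * (U * diagonal f * star U)
        = U * (diagonal e * ((star U * U) * (diagonal f * star U))) := by
          simp only [mul_assoc]
      _ = U * (diagonal e * (diagonal f * star U)) := by rw [hUU, one_mul]
      _ = U * diagonal (e * f) * star U := by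
          rw [← mul_assoc (diagonal e), diagonal_mul_diagonal, mul_assoc]
          rfl
  have keyT : ∀ e : k → ℝ, (U * diagonal e * star U)ᵀ = U * diagonal e * star U := by
    intro e
    have : (U * diagonal e * star U).IsHermitian := by
      rw [Matrix.IsHermitian]
      simp [conjTranspose_mul, mul_assoc, diagonal_conjTranspose, Matrix.star_eq_conjTranspose,
        conjTranspose_eq_transpose_of_trivial, transpose_transpose]
    rwa [Matrix.IsHermitian, conjTranspose_eq_transpose_of_trivial] at this
  have hdd : (d * (fun i => (d i)⁻¹) * d) = d := by
    ext i
    simp only [Pi.mul_apply]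
    rcases eq_or_ne (d i) 0 with h | h <;> field_simp [h]
  have hdd' : ((fun i => (d i)⁻¹) * d * fun i => (d i)⁻¹) = fun i => (d i)⁻¹ := by
    ext i
    simp only [Pi.mul_apply]
    rcases eq_or_ne (d i) 0 with h | h <;> field_simp [h]
  refine ⟨U * diagonal (fun i => (d i)⁻¹) * star U, ?_, ?_, ?_, ?_⟩
  · rw [hspec, key, key, hdd]
  · rw [hspec, key, key, hdd']
  · rw [hspec, key, keyT]
  · rw [hspec, key, keyT]

lemma penrose_unique {k : Type*} [Fintype k] [DecidableEq k] {A B C : Matrix k k ℝ}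
    (hB : A * B * A = A ∧ B * A * B = B ∧ (A * B)ᵀ = A * B ∧ (B * A)ᵀ = B * A)
    (hC : A * C * A = A ∧ C * A * C = C ∧ (A * C)ᵀ = A * C ∧ (C * A)ᵀ = C * A) :
    B = C := by
  obtain ⟨hB1, hB2, hB3, hB4⟩ := hB
  obtain ⟨hC1, hC2, hC3, hC4⟩ := hC
  have hAB : A * B = A * C := by
    calc A * B = (A * C * A) * B := by rw [hC1]
      _ = (A * C) * (A * B) := by simp only [mul_assoc]
      _ = (A * C)ᵀ * (A * B)ᵀ := by rw [hC3, hB3]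
      _ = ((A * B) * (A * C))ᵀ := by rw [transpose_mul (A * B) (A * C)]
      _ = ((A * B * A) * C)ᵀ := by simp only [mul_assoc]
      _ = (A * C)ᵀ := by rw [hB1]
      _ = A * C := hC3
  have hBA : B * A = C * A := by
    calc B * A = B * (A * C * A) := by rw [hC1]
      _ = (B * A) * (C * A) := by simp only [mul_assoc]
      _ = (B * A)ᵀ * (C * A)ᵀ := by rw [hB4, hC4]
      _ = ((C * A) * (B * A))ᵀ := by rw [transpose_mul (C * A) (B * A)]
      _ = (C * (A * B * A))ᵀ := by simp only [mul_assoc]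
      _ = (C * A)ᵀ := by rw [hB1]
      _ = C * A := hC4
  calc B = B * A * B := hB2.symm
    _ = B * (A * C) := by rw [mul_assoc, hAB]
    _ = (C * A) * C := by rw [← mul_assoc, hBA]
    _ = C := hC2

open Classical in
lemma pinv_spec {k : Type*} [Fintype k] [DecidableEq k] {A : Matrix k k ℝ} (hA : Aᵀ = A) :
    A * pinv A * A = A ∧ pinv A * A * pinv A = pinv A ∧
      (A * pinv A)ᵀ = A * pinv A ∧ (pinv A * A)ᵀ = pinv A * A := by
  have h := penrose_exists A hA
  rw [pinv, dif_pos h]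
  exact h.choose_spec

lemma pinv_symm {k : Type*} [Fintype k] [DecidableEq k] {A : Matrix k k ℝ} (hA : Aᵀ = A) :
    (pinv A)ᵀ = pinv A := by
  obtain ⟨h1, h2, h3, h4⟩ := pinv_spec hA
  set B := pinv A with hB
  have e1 : A * Bᵀ = B * A := by
    conv_lhs => rw [← hA, ← transpose_mul, h4]
  have e2 : Bᵀ * A = A * B := by
    conv_lhs => rw [← hA, ← transpose_mul, h3]
  have c1 : A * Bᵀ * A = A := by
    have := congrArg Matrix.transpose h1
    simpa [Matrix.transpose_mul, hA, mul_assoc] using this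
  have c2 : Bᵀ * A * Bᵀ = Bᵀ := by
    have := congrArg Matrix.transpose h2
    simpa [Matrix.transpose_mul, hA, mul_assoc] using this
  have c3 : (A * Bᵀ)ᵀ = A * Bᵀ := by rw [e1, h4]
  have c4 : (Bᵀ * A)ᵀ = Bᵀ * A := by rw [e2, h3]
  exact penrose_unique ⟨c1, c2, c3, c4⟩ ⟨h1, h2, h3, h4⟩

theorem stmt_1 (q r : ℕ)
    (P11 : Matrix (Fin q) (Fin q) ℝ) (P12 : Matrix (Fin q) (Fin r) ℝ)
    (P22 : Matrix (Fin r) (Fin r) ℝ)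
    (hP11 : P11ᵀ = P11) (hP22 : P22ᵀ = P22)
    (hneg : (-P22).PosSemidef)
    (hker : ∀ x : Fin r → ℝ, P22 *ᵥ x = 0 → P12 *ᵥ x = 0) :
    (∃ Z : Matrix (Fin r) (Fin q) ℝ,
        ((fromRows (1 : Matrix (Fin q) (Fin q) ℝ) Z)ᵀ * fromBlocks P11 P12 P12ᵀ P22 *
          fromRows (1 : Matrix (Fin q) (Fin q) ℝ) Z).PosSemidef) ↔
      (P11 - P12 * pinv P22 * P12ᵀ).PosSemidef := by
  obtain ⟨hs1, hs2, hs3, hs4⟩ := pinv_spec hP22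
  have hQ : (pinv P22)ᵀ = pinv P22 := pinv_symm hP22
  set Q := pinv P22 with hQdef
  -- from the kernel condition: P12 * (Q * P22) = P12
  have h1 : P12 * (Q * P22) = P12 := by
    set N : Matrix (Fin r) (Fin r) ℝ := 1 - Q * P22 with hN
    have hPN : P22 * N = 0 := by
      rw [hN, mul_sub, mul_one, ← mul_assoc, hs1, sub_self]
    have hcol : P12 * N = 0 := by
      ext i j
      have h0 : P22 *ᵥ (N *ᵥ Pi.single j 1) = 0 := by
        rw [mulVec_mulVec, hPN, zero_mulVec]
      have h12 := hker _ h0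
      rw [mulVec_mulVec] at h12
      have := congrFun h12 i
      simpa using this
    rw [hN, Matrix.mul_sub, Matrix.mul_one, sub_eq_zero] at hcol
    exact hcol.symm
  -- transposed version: P22 * (Q * P12ᵀ) = P12ᵀ
  have h2 : P22 * (Q * P12ᵀ) = P12ᵀ := by
    have h2l : P22 * Q * P12ᵀ = P12ᵀ := by
      simpa [Matrix.transpose_mul, hP22, hQ] using congrArg Matrix.transpose h1
    rw [← Matrix.mul_assoc]
    exact h2l
  have h1' : ∀ (X : Matrix (Fin r) (Fin q) ℝ), P12 * (Q * (P22 * X)) = P12 * X := by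
    intro X
    rw [← Matrix.mul_assoc, ← Matrix.mul_assoc, Matrix.mul_assoc P12, h1]
  -- key identity
  have key : ∀ Z : Matrix (Fin r) (Fin q) ℝ,
      (fromRows (1 : Matrix (Fin q) (Fin q) ℝ) Z)ᵀ * fromBlocks P11 P12 P12ᵀ P22 *
          fromRows (1 : Matrix (Fin q) (Fin q) ℝ) Z
        = (P11 - P12 * Q * P12ᵀ) + (Z + Q * P12ᵀ)ᵀ * P22 * (Z + Q * P12ᵀ) := by
    intro Z
    rw [transpose_fromRows, Matrix.mul_assoc, fromBlocks_mul_fromRows, fromCols_mul_fromRows]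
    simp only [transpose_one, Matrix.one_mul, Matrix.mul_one, transpose_add, transpose_mul,
      transpose_transpose, hQ, Matrix.mul_add, Matrix.add_mul, Matrix.mul_assoc, h2, h1']
    abel
  constructor
  · rintro ⟨Z, hZ⟩
    rw [key Z] at hZ
    set W := Z + Q * P12ᵀ with hW
    have hpsd : (Wᵀ * (-P22) * W).PosSemidef := by
      have := hneg.conjTranspose_mul_mul_same W
      rwa [conjTranspose_eq_transpose_of_trivial] at this
    have hsum := hZ.add hpsd
    have : P11 - P12 * Q * P12ᵀ + Wᵀ * P22 * W + Wᵀ * (-P22) * W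
        = P11 - P12 * Q * P12ᵀ := by
      simp only [Matrix.mul_neg, Matrix.neg_mul]
      abel
    rwa [this] at hsum
  · intro hS
    refine ⟨-(Q * P12ᵀ), ?_⟩
    rw [key]
    simp only [neg_add_cancel, Matrix.mul_zero, Matrix.zero_mul, add_zero]
    exact hS
end

section
/- Let X+, X-, U- be real matrices of sizes n×T, n×T, m×T, and let A_m ∈ R^{n×n}. Suppose there exist K ∈ R^{m×n} and a scalar α1 > 0 such that the 4×4 block matrix [[X+X+^T, -X+X-^T, -X+U-^T, -A_m],[-X-X+^T, X-X-^T, X-U-^T, I],[-U-X+^T, U-X-^T, U-U-^T, K],[-A_m^T, I, K^T, α1 I]] is positive semidefinite. Then there exists V1 ∈ R^{T×n} with X+ V1 = A_m, X- V1 = I, and U- V1 = K. -/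
open Matrix

lemma mem_range_of_perp {p q : Type*} [Fintype p] [Fintype q] [DecidableEq p] [DecidableEq q]
    (A : Matrix p q ℝ) (c : p → ℝ)
    (h : ∀ y : p → ℝ, Aᵀ *ᵥ y = 0 → c ⬝ᵥ y = 0) : ∃ x : q → ℝ, A *ᵥ x = c := by
  set T := Matrix.toEuclideanLin A with hT
  set W := LinearMap.range T with hW
  have hc : ((WithLp.equiv 2 (p → ℝ)).symm c) ∈ Wᗮᗮ := by
    intro y hy
    have hAy : Aᵀ *ᵥ (WithLp.equiv 2 (p → ℝ)) y = 0 := by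
      have hadj : ∀ x : EuclideanSpace ℝ q, inner (𝕜 := ℝ) (T x) y = 0 := fun x =>
        (Submodule.mem_orthogonal W y).1 hy _ (LinearMap.mem_range_self T x)
      have h2 : Matrix.toEuclideanLin Aᵀ y = 0 := by
        have h3 : LinearMap.adjoint T y = 0 := by
          have h4 := hadj (LinearMap.adjoint T y)
          rwa [← LinearMap.adjoint_inner_right, inner_self_eq_zero] at h4
        have hAH : Aᴴ = Aᵀ := by ext i j; simp [Matrix.conjTranspose_apply]
        rw [← hAH, Matrix.toEuclideanLin_conjTranspose_eq_adjoint]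
        exact h3
      have h5 := congrArg (WithLp.equiv 2 (q → ℝ)) h2
      rw [WithLp.equiv_apply, Matrix.ofLp_toEuclideanLin_apply] at h5
      simpa using h5
    have h6 := h _ hAy
    rw [real_inner_comm]
    rw [show (inner ℝ ((WithLp.equiv 2 (p → ℝ)).symm c) y : ℝ)
        = c ⬝ᵥ (WithLp.equiv 2 (p → ℝ)) y from ?_]
    · exact h6
    · simp [inner, dotProduct, mul_comm]
  rw [Submodule.orthogonal_orthogonal] at hc
  obtain ⟨x, hx⟩ := hc
  refine ⟨(WithLp.equiv 2 (q → ℝ)) x, ?_⟩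
  have h7 := congrArg (WithLp.equiv 2 (p → ℝ)) hx
  rw [WithLp.equiv_apply, Matrix.ofLp_toEuclideanLin_apply] at h7
  simpa using h7

lemma dot_aux {p q : Type*} [Fintype p] [Fintype q] (M : Matrix p q ℝ) (x : p → ℝ) (y : q → ℝ) :
    x ⬝ᵥ (M *ᵥ y) = (Mᵀ *ᵥ x) ⬝ᵥ y := by
  rw [dotProduct_mulVec, mulVec_transpose]

lemma dot_key {N : Type*} [Fintype N] {α1 : ℝ} (hα1 : 0 < α1) (b : N → ℝ)
    (h : ∀ s : N → ℝ, 0 ≤ 2 * (b ⬝ᵥ s) + α1 * (s ⬝ᵥ s)) : b = 0 := by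
  have h2 := h (-(α1⁻¹ • b))
  have hbb : (0:ℝ) ≤ b ⬝ᵥ b := by
    have := dotProduct_self_star_nonneg (R := ℝ) b
    simpa using this
  have e1 : b ⬝ᵥ (-(α1⁻¹ • b)) = -(α1⁻¹ * (b ⬝ᵥ b)) := by
    simp [dotProduct_smul]
  have e2 : (-(α1⁻¹ • b)) ⬝ᵥ (-(α1⁻¹ • b)) = α1⁻¹ * (α1⁻¹ * (b ⬝ᵥ b)) := by
    simp [dotProduct_smul, smul_dotProduct, smul_eq_mul]
  rw [e1, e2] at h2
  have hα1' : α1 ≠ 0 := ne_of_gt hα1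
  have h3 : α1 * (α1⁻¹ * (α1⁻¹ * (b ⬝ᵥ b))) = α1⁻¹ * (b ⬝ᵥ b) := by
    field_simp
  rw [h3] at h2
  have hle : b ⬝ᵥ b ≤ 0 := by
    nlinarith [inv_pos.mpr hα1]
  exact dotProduct_self_eq_zero.mp (le_antisymm hle hbb)

theorem stmt_3 (n m T : ℕ)
    (Xp Xm : Matrix (Fin n) (Fin T) ℝ) (Um : Matrix (Fin m) (Fin T) ℝ)
    (Am : Matrix (Fin n) (Fin n) ℝ) (K : Matrix (Fin m) (Fin n) ℝ) (α1 : ℝ)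
    (hα1 : 0 < α1)
    (hLMI : (fromBlocks
        (fromBlocks (Xp * Xpᵀ) (-(Xp * Xmᵀ)) (-(Xm * Xpᵀ)) (Xm * Xmᵀ))
        (fromBlocks (-(Xp * Umᵀ)) (-Am) (Xm * Umᵀ) (1 : Matrix (Fin n) (Fin n) ℝ))
        (fromBlocks (-(Um * Xpᵀ)) (Um * Xmᵀ) (-Amᵀ) (1 : Matrix (Fin n) (Fin n) ℝ))
        (fromBlocks (Um * Umᵀ) K Kᵀ (α1 • (1 : Matrix (Fin n) (Fin n) ℝ)))).PosSemidef) :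
    ∃ V1 : Matrix (Fin T) (Fin n) ℝ, Xp * V1 = Am ∧ Xm * V1 = 1 ∧ Um * V1 = K := by
  have star' : ∀ (u v : Fin n → ℝ) (w : Fin m → ℝ),
      Xpᵀ *ᵥ u - Xmᵀ *ᵥ v - Umᵀ *ᵥ w = 0 → v - Amᵀ *ᵥ u + Kᵀ *ᵥ w = 0 := by
    intro u v w hq
    apply dot_key hα1
    intro s
    have h1 := hLMI.dotProduct_mulVec_nonneg (Sum.elim (Sum.elim u v) (Sum.elim w s))
    rw [star_trivial] at h1
    simp only [fromBlocks_mulVec, sumElim_dotProduct_sumElim, dotProduct_add,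
      neg_mulVec, dotProduct_neg, ← mulVec_mulVec, smul_mulVec, one_mulVec,
      dotProduct_smul, Sum.elim_comp_inl, Sum.elim_comp_inr] at h1
    rw [dot_aux Xp u, dot_aux Xp u, dot_aux Xp u, dot_aux Xm v, dot_aux Xm v, dot_aux Xm v,
      dot_aux Um w, dot_aux Um w, dot_aux Um w, dot_aux Am u, dot_aux K w,
      dotProduct_comm s (Amᵀ *ᵥ u), dotProduct_comm s v, dotProduct_comm s (Kᵀ *ᵥ w)] at h1
    set a := Xpᵀ *ᵥ u with ha
    set b2 := Xmᵀ *ᵥ v with hb2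
    set c2 := Umᵀ *ᵥ w with hc2
    set d := Amᵀ *ᵥ u with hd
    set e := Kᵀ *ᵥ w with he
    have hsub : a = b2 + c2 := by
      have h5 : a - b2 - c2 = 0 := hq
      have := sub_eq_zero.mp (by linear_combination (norm := abel) h5 : a - (b2 + c2) = 0)
      exact this
    rw [hsub] at h1
    simp only [dotProduct_add, add_dotProduct, smul_eq_mul] at h1
    have hcomm : b2 ⬝ᵥ c2 = c2 ⬝ᵥ b2 := dotProduct_comm _ _
    have hexp : (v - d + e) ⬝ᵥ s = v ⬝ᵥ s - d ⬝ᵥ s + e ⬝ᵥ s := by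
      simp [sub_dotProduct, add_dotProduct]
    rw [hexp]
    linarith
  set F : Matrix (Fin n ⊕ (Fin n ⊕ Fin m)) (Fin T) ℝ :=
    Matrix.of fun i k =>
      Sum.elim (fun i => Xp i k) (Sum.elim (fun i => -Xm i k) (fun i => -Um i k)) i with hF
  have hcol : ∀ j : Fin n, ∃ x : Fin T → ℝ,
      F *ᵥ x = Sum.elim (fun i => Am i j)
        (Sum.elim (fun i => -(1 : Matrix (Fin n) (Fin n) ℝ) i j) (fun i => -K i j)) := by
    intro j
    apply mem_range_of_perp
    intro y hy
    set u : Fin n → ℝ := fun i => y (Sum.inl i) with hu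
    set v : Fin n → ℝ := fun i => y (Sum.inr (Sum.inl i)) with hv
    set w : Fin m → ℝ := fun i => y (Sum.inr (Sum.inr i)) with hw
    have hq : Xpᵀ *ᵥ u - Xmᵀ *ᵥ v - Umᵀ *ᵥ w = 0 := by
      funext k
      have hk := congrFun hy k
      simp only [mulVec, dotProduct, transpose_apply, Fintype.sum_sum_type, hF, of_apply,
        Sum.elim_inl, Sum.elim_inr, Pi.zero_apply, Pi.sub_apply, neg_mul,
        Finset.sum_neg_distrib, hu, hv, hw] at hk ⊢
      linarith
    have hb := congrFun (star' u v w hq) j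
    simp only [Pi.sub_apply, Pi.add_apply, Pi.zero_apply, mulVec, dotProduct,
      transpose_apply] at hb
    simp only [dotProduct, Fintype.sum_sum_type, Sum.elim_inl, Sum.elim_inr, neg_mul,
      Finset.sum_neg_distrib, one_apply]
    have h1v : ∑ i : Fin n, (if i = j then (1:ℝ) else 0) * y (Sum.inr (Sum.inl i)) = v j := by
      simp [hv, Finset.sum_ite_eq]
    rw [h1v]
    simp only [hu, hv, hw] at hb
    linarith
  choose x hx using hcol
  refine ⟨Matrix.of fun k j => x j k, ?_, ?_, ?_⟩
  · ext i j
    have h := congrFun (hx j) (Sum.inl i)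
    simp only [mulVec, dotProduct, hF, of_apply, Sum.elim_inl, Sum.elim_inr] at h
    simpa [Matrix.mul_apply] using h
  · ext i j
    have h := congrFun (hx j) (Sum.inr (Sum.inl i))
    simp only [mulVec, dotProduct, hF, of_apply, Sum.elim_inl, Sum.elim_inr, neg_mul,
      Finset.sum_neg_distrib] at h
    simp only [Matrix.mul_apply, of_apply]
    linarith
  · ext i j
    have h := congrFun (hx j) (Sum.inr (Sum.inr i))
    simp only [mulVec, dotProduct, hF, of_apply, Sum.elim_inl, Sum.elim_inr, neg_mul,
      Finset.sum_neg_distrib] at h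
    simp only [Matrix.mul_apply, of_apply]
    linarith
end

section
/- Fix matrices A_m ∈ R^{n×n}, B_m ∈ R^{n×p} and data matrices X- , X+ ∈ R^{n×T}, U- ∈ R^{m×T}. Suppose there exist V1 ∈ R^{T×n} and V2 ∈ R^{T×p} with X- V1 = I, X+ V1 = A_m, X- V2 = 0, X+ V2 = B_m. Then with K := U- V1 and L := U- V2, every pair (A,B) ∈ R^{n×n} × R^{n×m} satisfying X+ = A X- + B U- also satisfies A + B K = A_m and B L = B_m. -/
open Matrix

theorem stmt_5 (n m p T : ℕ)
    (Am : Matrix (Fin n) (Fin n) ℝ) (Bm : Matrix (Fin n) (Fin p) ℝ)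
    (Xm Xp : Matrix (Fin n) (Fin T) ℝ) (Um : Matrix (Fin m) (Fin T) ℝ)
    (V1 : Matrix (Fin T) (Fin n) ℝ) (V2 : Matrix (Fin T) (Fin p) ℝ)
    (h1 : Xm * V1 = 1) (h2 : Xp * V1 = Am) (h3 : Xm * V2 = 0) (h4 : Xp * V2 = Bm) :
    ∀ (A : Matrix (Fin n) (Fin n) ℝ) (B : Matrix (Fin n) (Fin m) ℝ),
      Xp = A * Xm + B * Um →
        A + B * (Um * V1) = Am ∧ B * (Um * V2) = Bm := by
  intro A B h
  constructor
  · have := congrArg (· * V1) h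
    simp only [Matrix.add_mul, Matrix.mul_assoc, h1, h2, Matrix.mul_one] at this
    linear_combination (norm := noncomm_ring) -this
  · have := congrArg (· * V2) h
    simp only [Matrix.add_mul, Matrix.mul_assoc, h3, h4, Matrix.mul_zero, zero_add] at this
    exact this.symm
end

section
/- Fix A_m ∈ R^{n×n}, B_m ∈ R^{n×p} and data X-, X+ ∈ R^{n×T}, U- ∈ R^{m×T} such that the set Σ = {(A,B) : X+ = A X- + B U-} is nonempty. Suppose there exist K ∈ R^{m×n}, L ∈ R^{m×p} such that every (A,B) ∈ Σ satisfies A + BK = A_m and BL = B_m. Then there exist V1 ∈ R^{T×n} and V2 ∈ R^{T×p} such that X- V1 = I, X+ V1 = A_m, X- V2 = 0, and X+ V2 = B_m. -/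
open Matrix

lemma mem_range_of_dual' {R V W : Type*} [Field R] [AddCommGroup V] [Module R V]
    [AddCommGroup W] [Module R W] (f : V →ₗ[R] W) (w : W)
    (h : ∀ φ : Module.Dual R W, (∀ v, φ (f v) = 0) → φ w = 0) :
    w ∈ LinearMap.range f := by
  by_contra hw
  have hq : (LinearMap.range f).mkQ w ≠ 0 := by
    simpa [Submodule.Quotient.mk_eq_zero] using hw
  have hq2 : ¬ ∀ φ' : Module.Dual R (W ⧸ LinearMap.range f), φ' ((LinearMap.range f).mkQ w) = 0 := by
    rw [Module.forall_dual_apply_eq_zero_iff R]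
    exact hq
  push_neg at hq2
  obtain ⟨φ', hφ'⟩ := hq2
  refine hφ' ?_
  refine h (φ'.comp (LinearMap.range f).mkQ) ?_
  intro v
  have : ((LinearMap.range f).mkQ) (f v) = 0 := by
    simp [Submodule.Quotient.mk_eq_zero]
  simp only [LinearMap.comp_apply] at *
  rw [Submodule.mkQ_apply] at this ⊢
  rw [this, map_zero]

theorem stmt_6 (n m p T : ℕ)
    (Am : Matrix (Fin n) (Fin n) ℝ) (Bm : Matrix (Fin n) (Fin p) ℝ)
    (Xm Xp : Matrix (Fin n) (Fin T) ℝ) (Um : Matrix (Fin m) (Fin T) ℝ)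
    (hne : ∃ (A : Matrix (Fin n) (Fin n) ℝ) (B : Matrix (Fin n) (Fin m) ℝ),
      Xp = A * Xm + B * Um)
    (K : Matrix (Fin m) (Fin n) ℝ) (L : Matrix (Fin m) (Fin p) ℝ)
    (hmatch : ∀ (A : Matrix (Fin n) (Fin n) ℝ) (B : Matrix (Fin n) (Fin m) ℝ),
      Xp = A * Xm + B * Um → A + B * K = Am ∧ B * L = Bm) :
    ∃ (V1 : Matrix (Fin T) (Fin n) ℝ) (V2 : Matrix (Fin T) (Fin p) ℝ),
      Xm * V1 = 1 ∧ Xp * V1 = Am ∧ Xm * V2 = 0 ∧ Xp * V2 = Bm := by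
  obtain ⟨A0, B0, hAB⟩ := hne
  obtain ⟨hA0, hB0⟩ := hmatch A0 B0 hAB
  rcases Nat.eq_zero_or_pos n with hn | hn
  · subst hn
    exact ⟨0, 0, by ext i j; exact i.elim0, by ext i j; exact i.elim0,
      by ext i j; exact i.elim0, by ext i j; exact i.elim0⟩
  have a0 : Fin n := ⟨0, hn⟩
  set f : (Fin T → ℝ) →ₗ[ℝ] (Fin n → ℝ) × (Fin m → ℝ) :=
    (Matrix.mulVecLin Xm).prod (Matrix.mulVecLin Um) with hf
  have hdelta : ∀ φ : Module.Dual ℝ ((Fin n → ℝ) × (Fin m → ℝ)), (∀ v, φ (f v) = 0) →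
      (∀ j : Fin n, φ (Pi.single j 1, fun c => K c j) = 0) ∧
      (∀ j : Fin p, φ (0, fun c => L c j) = 0) := by
    intro φ hφ
    set zx : Fin n → ℝ := fun b => φ (Pi.single b 1, 0) with hzx
    set zu : Fin m → ℝ := fun c => φ (0, Pi.single c 1) with hzu
    have hphi : ∀ (x : Fin n → ℝ) (u : Fin m → ℝ),
        φ (x, u) = ∑ b, x b * zx b + ∑ c, u c * zu c := by
      intro x u
      have h1 : (x, u) = (∑ b, x b • ((Pi.single b 1 : Fin n → ℝ), (0 : Fin m → ℝ)))
          + ∑ c, u c • ((0 : Fin n → ℝ), (Pi.single c 1 : Fin m → ℝ)) := by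
        apply Prod.ext
        · simp only [Prod.fst_add, Prod.fst_sum, Prod.smul_fst, smul_zero,
            Finset.sum_const_zero, add_zero]
          rw [← Finset.univ_sum_single x]
          congr 1
          ext b i
          simp [Pi.single_apply]
        · simp only [Prod.snd_add, Prod.snd_sum, Prod.smul_snd, smul_zero,
            Finset.sum_const_zero, zero_add]
          rw [← Finset.univ_sum_single u]
          congr 1
          ext c i
          simp [Pi.single_apply]
      rw [h1, map_add, map_sum, map_sum]
      congr 1
      · refine Finset.sum_congr rfl fun b _ => ?_
        rw [_root_.map_smul, smul_eq_mul]
      · refine Finset.sum_congr rfl fun c _ => ?_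
        rw [_root_.map_smul, smul_eq_mul]
    set Da : Matrix (Fin n) (Fin n) ℝ := Matrix.of (fun _ b => zx b) with hDa
    set Db : Matrix (Fin n) (Fin m) ℝ := Matrix.of (fun _ c => zu c) with hDb
    have hsum : Da * Xm + Db * Um = 0 := by
      ext a t
      have h0 := hφ (Pi.single t 1)
      have hfv : f (Pi.single t 1) = ((fun i => Xm i t), (fun i => Um i t)) := by
        simp only [hf, LinearMap.prod_apply, Pi.prod, Matrix.mulVecLin_apply]
        apply Prod.ext <;> · ext i; simp [Matrix.mulVec, dotProduct, Pi.single_apply]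
      rw [hfv, hphi] at h0
      simp only [Matrix.add_apply, Matrix.mul_apply, hDa, hDb, Matrix.of_apply,
        Matrix.zero_apply]
      rw [← h0]
      congr 1 <;> · apply Finset.sum_congr rfl; intro b _; ring
    have hmem : Xp = (A0 + Da) * Xm + (B0 + Db) * Um := by
      rw [Matrix.add_mul, Matrix.add_mul, hAB]
      have he : A0 * Xm + Da * Xm + (B0 * Um + Db * Um)
          = (A0 * Xm + B0 * Um) + (Da * Xm + Db * Um) := by abel
      rw [he, hsum, add_zero]
    obtain ⟨h1, h2⟩ := hmatch _ _ hmem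
    have hDK : Da + Db * K = 0 := by
      have h1' : A0 + Da + (B0 * K + Db * K) = A0 + B0 * K := by
        rw [← Matrix.add_mul, h1, hA0]
      have he : Da + Db * K = (A0 + Da + (B0 * K + Db * K)) - (A0 + B0 * K) := by abel
      rw [he, h1', sub_self]
    have hDL : Db * L = 0 := by
      have h2' : B0 * L + Db * L = B0 * L := by
        rw [← Matrix.add_mul, h2, hB0]
      have he : Db * L = (B0 * L + Db * L) - B0 * L := by abel
      rw [he, h2', sub_self]
    constructor
    · intro j
      have h3 := congrFun (congrFun hDK a0) j
      simp only [Matrix.add_apply, Matrix.mul_apply, hDa, hDb, Matrix.of_apply,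
        Matrix.zero_apply] at h3
      rw [hphi]
      simp only [Pi.single_apply, ite_mul, one_mul, zero_mul,
        Finset.sum_ite_eq', Finset.mem_univ, if_true]
      simpa [mul_comm] using h3
    · intro j
      have h3 := congrFun (congrFun hDL a0) j
      simp only [Matrix.mul_apply, hDb, Matrix.of_apply, Matrix.zero_apply] at h3
      rw [hphi]
      simpa [mul_comm] using h3
  have hv1 : ∀ j : Fin n, ∃ v : Fin T → ℝ, Xm *ᵥ v = Pi.single j 1 ∧ Um *ᵥ v = fun c => K c j := by
    intro j
    obtain ⟨v, hv⟩ := mem_range_of_dual' f ((Pi.single j 1 : Fin n → ℝ), fun c => K c j)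
      (fun φ hφ => (hdelta φ hφ).1 j)
    refine ⟨v, ?_, ?_⟩
    · have := congrArg Prod.fst hv; simpa [hf] using this
    · have := congrArg Prod.snd hv; simpa [hf] using this
  have hv2 : ∀ j : Fin p, ∃ v : Fin T → ℝ, Xm *ᵥ v = 0 ∧ Um *ᵥ v = fun c => L c j := by
    intro j
    obtain ⟨v, hv⟩ := mem_range_of_dual' f ((0 : Fin n → ℝ), fun c => L c j)
      (fun φ hφ => (hdelta φ hφ).2 j)
    refine ⟨v, ?_, ?_⟩
    · have := congrArg Prod.fst hv; simpa [hf] using this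
    · have := congrArg Prod.snd hv; simpa [hf] using this
  choose v1 hv1x hv1u using hv1
  choose v2 hv2x hv2u using hv2
  refine ⟨Matrix.of (fun t j => v1 j t), Matrix.of (fun t j => v2 j t), ?_, ?_, ?_, ?_⟩
  · ext i j
    have := congrFun (hv1x j) i
    simp only [Matrix.mul_apply, Matrix.of_apply, Matrix.one_apply]
    rw [show ∑ t, Xm i t * v1 j t = (Xm *ᵥ v1 j) i from rfl, this, Pi.single_apply]
  · have hU : Um * Matrix.of (fun t j => v1 j t) = K := by
      ext c j
      have := congrFun (hv1u j) c
      simpa [Matrix.mul_apply, Matrix.mulVec, dotProduct] using this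
    have hX : Xm * Matrix.of (fun t j => v1 j t) = 1 := by
      ext i j
      have := congrFun (hv1x j) i
      simp only [Matrix.mul_apply, Matrix.of_apply, Matrix.one_apply]
      rw [show ∑ t, Xm i t * v1 j t = (Xm *ᵥ v1 j) i from rfl, this, Pi.single_apply]
    rw [hAB, Matrix.add_mul, Matrix.mul_assoc, Matrix.mul_assoc, hU, hX, Matrix.mul_one, hA0]
  · ext i j
    have := congrFun (hv2x j) i
    simp only [Matrix.mul_apply, Matrix.of_apply, Matrix.zero_apply]
    rw [show ∑ t, Xm i t * v2 j t = (Xm *ᵥ v2 j) i from rfl, this]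
    rfl
  · have hU : Um * Matrix.of (fun t j => v2 j t) = L := by
      ext c j
      have := congrFun (hv2u j) c
      simpa [Matrix.mul_apply, Matrix.mulVec, dotProduct] using this
    have hX : Xm * Matrix.of (fun t j => v2 j t) = 0 := by
      ext i j
      have := congrFun (hv2x j) i
      simp only [Matrix.mul_apply, Matrix.of_apply, Matrix.zero_apply]
      rw [show ∑ t, Xm i t * v2 j t = (Xm *ᵥ v2 j) i from rfl, this]
      rfl
    rw [hAB, Matrix.add_mul, Matrix.mul_assoc, Matrix.mul_assoc, hU, hX, Matrix.mul_zero, zero_add, hB0]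
end

section
/- Let Σ = {(A,B) ∈ R^{n×n} × R^{n×m} : X+ = A X- + B U-} be nonempty and let Σ^0 = {(A⁰,B⁰) : 0 = A⁰ X- + B⁰ U-}. Suppose K, L are such that every (A,B) ∈ Σ satisfies A + BK = A_m and BL = B_m. Then every (A⁰,B⁰) ∈ Σ^0 satisfies A⁰ + B⁰K = 0 and B⁰L = 0. -/
open Matrix

theorem stmt_7 (n m p T : ℕ)
    (Am : Matrix (Fin n) (Fin n) ℝ) (Bm : Matrix (Fin n) (Fin p) ℝ)
    (Xm Xp : Matrix (Fin n) (Fin T) ℝ) (Um : Matrix (Fin m) (Fin T) ℝ)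
    (hne : ∃ (A : Matrix (Fin n) (Fin n) ℝ) (B : Matrix (Fin n) (Fin m) ℝ),
      Xp = A * Xm + B * Um)
    (K : Matrix (Fin m) (Fin n) ℝ) (L : Matrix (Fin m) (Fin p) ℝ)
    (hmatch : ∀ (A : Matrix (Fin n) (Fin n) ℝ) (B : Matrix (Fin n) (Fin m) ℝ),
      Xp = A * Xm + B * Um → A + B * K = Am ∧ B * L = Bm) :
    ∀ (A0 : Matrix (Fin n) (Fin n) ℝ) (B0 : Matrix (Fin n) (Fin m) ℝ),
      (0 : Matrix (Fin n) (Fin T) ℝ) = A0 * Xm + B0 * Um →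
        A0 + B0 * K = 0 ∧ B0 * L = 0 := by
  rintro A0 B0 h0
  obtain ⟨A, B, hAB⟩ := hne
  obtain ⟨hK, hL⟩ := hmatch A B hAB
  have h2 : Xp = (A + A0) * Xm + (B + B0) * Um := by
    rw [Matrix.add_mul, Matrix.add_mul, hAB]
    rw [show A * Xm + A0 * Xm + (B * Um + B0 * Um)
        = (A * Xm + B * Um) + (A0 * Xm + B0 * Um) by abel, ← h0, add_zero]
  obtain ⟨hK', hL'⟩ := hmatch (A + A0) (B + B0) h2
  rw [Matrix.add_mul] at hK' hL'
  constructor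
  · have h : A + A0 + (B * K + B0 * K) = A + B * K := by rw [hK', hK]
    have h4 : (A + B * K) + (A0 + B0 * K) = (A + B * K) + 0 := by
      rw [add_zero]
      calc (A + B * K) + (A0 + B0 * K) = A + A0 + (B * K + B0 * K) := by abel
        _ = A + B * K := h
    exact add_left_cancel h4
  · have h : B * L + B0 * L = B * L := by rw [hL', hL]
    have h4 : B * L + B0 * L = B * L + 0 := by rw [add_zero, h]
    exact add_left_cancel h4
end

section
/- Let D^A ≥ 0, Γ^A > 0 be symmetric n×n matrices and A_m ∈ R^{n×n}. Suppose there exists F ∈ R^{n×n} such that D^A - (F - A_m) Γ^A (F - A_m)^T ≥ 0 and F has eigenvalue 1 (i.e., F x = x for some nonzero x ∈ R^n). Then the matrix (A_m - I) Γ^A (A_m - I)^T - D^A is not positive definite, i.e., there is a nonzero vector x with x^T ((A_m - I) Γ^A (A_m - I)^T - D^A) x ≤ 0. -/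
/-!
A fixed vector of `F` makes `F - 1` singular, so `F` also has a left fixed vector `y`,
`y ᵥ* F = y`. Then `y ᵥ* (Am - 1) = -(y ᵥ* (F - Am))`, so the quadratic forms of
`(Am - 1) Γ (Am - 1)ᵀ` and `(F - Am) Γ (F - Am)ᵀ` agree at `y`, and the latter is bounded
by that of `D` because `D - (F - Am) Γ (F - Am)ᵀ` is positive semidefinite.
-/

open Matrix

namespace Matrix

variable {n R : Type*} [Fintype n]

theorem exists_vecMul_eq_self_of_mulVec_eq_self [DecidableEq n] [CommRing R] [IsDomain R]
    {F : Matrix n n R} {x : n → R} (hx : x ≠ 0) (hFx : F *ᵥ x = x) :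
    ∃ y ≠ 0, y ᵥ* F = y := by
  have hdet : (F - 1).det = 0 :=
    exists_mulVec_eq_zero_iff.mp ⟨x, hx, by rw [sub_mulVec, one_mulVec, hFx, sub_self]⟩
  obtain ⟨y, hy, hyF⟩ := exists_vecMul_eq_zero_iff.mpr hdet
  exact ⟨y, hy, by rwa [vecMul_sub, vecMul_one, sub_eq_zero] at hyF⟩

theorem dotProduct_mul_mul_transpose_mulVec [CommSemiring R] (A Γ : Matrix n n R) (y : n → R) :
    y ⬝ᵥ ((A * Γ * Aᵀ) *ᵥ y) = (y ᵥ* A) ⬝ᵥ (Γ *ᵥ (y ᵥ* A)) := by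
  rw [← mulVec_mulVec, ← mulVec_mulVec, dotProduct_mulVec, mulVec_transpose]

theorem vecMul_sub_one_eq_neg_vecMul_sub [DecidableEq n] [Ring R]
    {F : Matrix n n R} {y : n → R} (hyF : y ᵥ* F = y) (A : Matrix n n R) :
    y ᵥ* (A - 1) = -(y ᵥ* (F - A)) := by
  rw [vecMul_sub, vecMul_sub, vecMul_one, hyF, neg_sub]

end Matrix

theorem stmt_14_general (n : ℕ)
    (Am DA ΓA : Matrix (Fin n) (Fin n) ℝ)
    (F : Matrix (Fin n) (Fin n) ℝ)
    (hF : (DA - (F - Am) * ΓA * (F - Am)ᵀ).PosSemidef)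
    (x : Fin n → ℝ) (hx : x ≠ 0) (heig : F *ᵥ x = x) :
    ∃ y : Fin n → ℝ, y ≠ 0 ∧
      y ⬝ᵥ (((Am - 1) * ΓA * (Am - 1)ᵀ - DA) *ᵥ y) ≤ 0 := by
  obtain ⟨y, hy, hyF⟩ := exists_vecMul_eq_self_of_mulVec_eq_self hx heig
  have hform : y ⬝ᵥ (((Am - 1) * ΓA * (Am - 1)ᵀ) *ᵥ y)
      = y ⬝ᵥ (((F - Am) * ΓA * (F - Am)ᵀ) *ᵥ y) := by
    rw [dotProduct_mul_mul_transpose_mulVec, dotProduct_mul_mul_transpose_mulVec,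
      vecMul_sub_one_eq_neg_vecMul_sub hyF, mulVec_neg, dotProduct_neg, neg_dotProduct, neg_neg]
  have hnonneg := hF.dotProduct_mulVec_nonneg y
  rw [star_trivial, sub_mulVec, dotProduct_sub] at hnonneg
  refine ⟨y, hy, ?_⟩
  rw [sub_mulVec, dotProduct_sub, hform]
  linarith

theorem stmt_14 (n : ℕ)
    (Am DA ΓA : Matrix (Fin n) (Fin n) ℝ)
    (hD : DA.PosSemidef) (hΓ : ΓA.PosDef)
    (F : Matrix (Fin n) (Fin n) ℝ)
    (hF : (DA - (F - Am) * ΓA * (F - Am)ᵀ).PosSemidef)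
    (x : Fin n → ℝ) (hx : x ≠ 0) (heig : F *ᵥ x = x) :
    ∃ y : Fin n → ℝ, y ≠ 0 ∧
      y ⬝ᵥ (((Am - 1) * ΓA * (Am - 1)ᵀ - DA) *ᵥ y) ≤ 0 :=
  stmt_14_general n Am DA ΓA F hF x hx heig
end

section
/- Let D^A ≥ 0, Γ^A > 0 be symmetric n×n matrices and A_m ∈ R^{n×n}. Suppose x ∈ R^n is nonzero and satisfies x^T ((A_m - I) Γ^A (A_m - I)^T - D^A) x ≤ 0, equivalently [x; x]^T R' [x; x] ≥ 0 where R' = [[D^A - A_m Γ^A A_m^T, A_m Γ^A],[Γ^A A_m^T, -Γ^A]]. Then there exists F ∈ R^{n×n} with D^A - (F - A_m) Γ^A (F - A_m)^T ≥ 0 and F^T x = x, so F has eigenvalue 1. -/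
open Matrix

private lemma vecMulVec_mulVec' {n : ℕ} (w v u : Fin n → ℝ) :
    vecMulVec w v *ᵥ u = (v ⬝ᵥ u) • w := by
  ext i
  simp [vecMulVec_apply, mulVec, dotProduct, Finset.mul_sum, mul_assoc, mul_comm, mul_left_comm]

private lemma vecMulVec_transpose' {n : ℕ} (w v : Fin n → ℝ) :
    (vecMulVec w v)ᵀ = vecMulVec v w := by
  ext i j; simp [vecMulVec_apply, mul_comm]

private lemma mul_vecMulVec' {n : ℕ} (A : Matrix (Fin n) (Fin n) ℝ) (w v : Fin n → ℝ) :
    vecMulVec w v * A = vecMulVec w (v ᵥ* A) := by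
  ext i j
  simp [vecMulVec_apply, mul_apply, vecMul, dotProduct, Finset.mul_sum, mul_assoc]

private lemma vecMulVec_mul_vecMulVec' {n : ℕ} (w v a b : Fin n → ℝ) :
    vecMulVec w v * vecMulVec a b = (v ⬝ᵥ a) • vecMulVec w b := by
  ext i j
  simp only [mul_apply, vecMulVec_apply, Matrix.smul_apply, smul_eq_mul, dotProduct, Finset.sum_mul]
  exact Finset.sum_congr rfl fun k _ => by ring

private lemma herm_of_transpose {n : ℕ} {A : Matrix (Fin n) (Fin n) ℝ} (h : Aᵀ = A) :
    A.IsHermitian := by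
  rw [Matrix.IsHermitian, conjTranspose_eq_transpose_of_trivial, h]

private lemma transpose_of_herm {n : ℕ} {A : Matrix (Fin n) (Fin n) ℝ} (h : A.IsHermitian) :
    Aᵀ = A := by
  rw [← conjTranspose_eq_transpose_of_trivial]; exact h

private lemma dot_symm {n : ℕ} (A : Matrix (Fin n) (Fin n) ℝ) (hA : Aᵀ = A)
    (u w : Fin n → ℝ) : u ⬝ᵥ A *ᵥ w = w ⬝ᵥ A *ᵥ u := by
  rw [dotProduct_mulVec, ← mulVec_transpose, hA, dotProduct_comm]

private lemma cauchy_schwarz_psd {n : ℕ} (A : Matrix (Fin n) (Fin n) ℝ)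
    (hA : A.PosSemidef) (x v : Fin n → ℝ) :
    (x ⬝ᵥ A *ᵥ v) ^ 2 ≤ (x ⬝ᵥ A *ᵥ x) * (v ⬝ᵥ A *ᵥ v) := by
  have hAt : Aᵀ = A := transpose_of_herm hA.1
  have key : ∀ t : ℝ, 0 ≤ (x ⬝ᵥ A *ᵥ x) * (t * t) + (2 * (x ⬝ᵥ A *ᵥ v)) * t
      + (v ⬝ᵥ A *ᵥ v) := by
    intro t
    have h0 := hA.dotProduct_mulVec_nonneg (v + t • x)
    simp only [RCLike.star_def, star_trivial] at h0
    have hexp : (v + t • x) ⬝ᵥ A *ᵥ (v + t • x)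
        = (x ⬝ᵥ A *ᵥ x) * (t * t) + (2 * (x ⬝ᵥ A *ᵥ v)) * t + (v ⬝ᵥ A *ᵥ v) := by
      have hsym : v ⬝ᵥ A *ᵥ x = x ⬝ᵥ A *ᵥ v := dot_symm A hAt v x
      simp only [mulVec_add, mulVec_smul, dotProduct_add, add_dotProduct, dotProduct_smul,
        smul_dotProduct, smul_eq_mul, hsym]
      ring
    rw [hexp] at h0
    exact h0
  have hdl := discrim_le_zero key
  simp only [discrim] at hdl
  nlinarith [hdl]

theorem stmt_15 (n : ℕ)
    (Am DA ΓA : Matrix (Fin n) (Fin n) ℝ)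
    (hD : DA.PosSemidef) (hΓ : ΓA.PosDef)
    (x : Fin n → ℝ) (hx : x ≠ 0)
    (hq : x ⬝ᵥ (((Am - 1) * ΓA * (Am - 1)ᵀ - DA) *ᵥ x) ≤ 0) :
    ∃ F : Matrix (Fin n) (Fin n) ℝ,
      (DA - (F - Am) * ΓA * (F - Am)ᵀ).PosSemidef ∧ Fᵀ *ᵥ x = x := by
  set y : Fin n → ℝ := (Am - 1)ᵀ *ᵥ x with hy
  set c : ℝ := y ⬝ᵥ ΓA *ᵥ y with hc
  set d : ℝ := x ⬝ᵥ DA *ᵥ x with hd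
  have hcd : c ≤ d := by
    have h1 : x ⬝ᵥ ((Am - 1) * ΓA * (Am - 1)ᵀ) *ᵥ x = c := by
      rw [← mulVec_mulVec, ← mulVec_mulVec, dotProduct_mulVec, ← mulVec_transpose]
    have h2 : x ⬝ᵥ (((Am - 1) * ΓA * (Am - 1)ᵀ - DA) *ᵥ x)
        = x ⬝ᵥ ((Am - 1) * ΓA * (Am - 1)ᵀ) *ᵥ x - d := by
      simp [sub_mulVec, dotProduct_sub, hd]
    rw [h2, h1] at hq
    linarith
  by_cases hy0 : y = 0
  · refine ⟨Am, ?_, ?_⟩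
    · simpa using hD
    · have h0 : Amᵀ *ᵥ x - x = 0 := by
        have h := hy0
        rw [hy, transpose_sub, transpose_one, sub_mulVec, one_mulVec] at h
        exact h
      exact sub_eq_zero.mp h0
  · have hcpos : 0 < c := by
      have := hΓ.dotProduct_mulVec_pos hy0
      simpa [hc] using this
    have hdpos : 0 < d := lt_of_lt_of_le hcpos hcd
    have hDAt : DAᵀ = DA := transpose_of_herm hD.1
    set z : Fin n → ℝ := d⁻¹ • (DA *ᵥ x) with hz
    refine ⟨Am - vecMulVec z y, ?_, ?_⟩
    · have hFG : (Am - vecMulVec z y - Am) * ΓA * (Am - vecMulVec z y - Am)ᵀ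
          = c • vecMulVec z z := by
        have h1 : Am - vecMulVec z y - Am = -(vecMulVec z y) := sub_sub_cancel_left _ _
        rw [h1, transpose_neg, vecMulVec_transpose', neg_mul, neg_mul_neg,
          mul_vecMulVec', vecMulVec_mul_vecMulVec']
        congr 1
        rw [← dotProduct_mulVec]
      rw [hFG]
      refine Matrix.PosSemidef.of_dotProduct_mulVec_nonneg ?_ ?_
      · refine (herm_of_transpose ?_)
        rw [transpose_sub, transpose_smul, vecMulVec_transpose', hDAt]
      · intro v
        simp only [RCLike.star_def, star_trivial]
        have hzv : z ⬝ᵥ v = d⁻¹ * (x ⬝ᵥ DA *ᵥ v) := by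
          rw [hz, smul_dotProduct, smul_eq_mul]
          congr 1
          rw [dotProduct_comm, dot_symm DA hDAt v x]
        have hquad : v ⬝ᵥ (DA - c • vecMulVec z z) *ᵥ v
            = v ⬝ᵥ DA *ᵥ v - c * (z ⬝ᵥ v) ^ 2 := by
          rw [sub_mulVec, dotProduct_sub]
          congr 1
          rw [smul_mulVec, vecMulVec_mulVec', dotProduct_smul, dotProduct_smul,
            smul_eq_mul, smul_eq_mul, dotProduct_comm]
          ring
        rw [hquad, hzv]
        set q : ℝ := v ⬝ᵥ DA *ᵥ v with hqv
        set b : ℝ := x ⬝ᵥ DA *ᵥ v with hb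
        have hcs : b ^ 2 ≤ d * q := cauchy_schwarz_psd DA hD x v
        have hq0 : 0 ≤ q := by
          have := hD.dotProduct_mulVec_nonneg v; simpa [hqv] using this
        have h1 : (d⁻¹ * b) ^ 2 ≤ d⁻¹ * q := by
          have hstep : d⁻¹ * d⁻¹ * b ^ 2 ≤ d⁻¹ * d⁻¹ * (d * q) :=
            mul_le_mul_of_nonneg_left hcs (by positivity)
          calc (d⁻¹ * b) ^ 2 = d⁻¹ * d⁻¹ * b ^ 2 := by ring
            _ ≤ d⁻¹ * d⁻¹ * (d * q) := hstep
            _ = (d⁻¹ * d) * (d⁻¹ * q) := by ring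
            _ = d⁻¹ * q := by rw [inv_mul_cancel₀ (ne_of_gt hdpos), one_mul]
        have h2 : c * (d⁻¹ * b) ^ 2 ≤ c * (d⁻¹ * q) :=
          mul_le_mul_of_nonneg_left h1 (le_of_lt hcpos)
        have h3 : c * (d⁻¹ * q) ≤ d * (d⁻¹ * q) :=
          mul_le_mul_of_nonneg_right hcd (by positivity)
        have h4 : d * (d⁻¹ * q) = q := by
          rw [← mul_assoc, mul_inv_cancel₀ (ne_of_gt hdpos), one_mul]
        linarith
    · rw [transpose_sub, vecMulVec_transpose', sub_mulVec, vecMulVec_mulVec']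
      have hzx : z ⬝ᵥ x = 1 := by
        rw [hz, smul_dotProduct, smul_eq_mul, dotProduct_comm]
        exact inv_mul_cancel₀ (ne_of_gt hdpos)
      rw [hzx, one_smul]
      have hy' : y = Amᵀ *ᵥ x - x := by
        rw [hy, transpose_sub, transpose_one, sub_mulVec, one_mulVec]
      rw [hy']
      abel
end
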